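/- Let ρ, u, v : ℝ × ℝ → ℝ be smooth (C²) functions, L-periodic in y for some L > 0, satisfying the coupled CD system ρ_s + (uv/2)_y = 0, u_{ys} = ρu, and v_{ys} = ρv for all (y, s). Then the conserved quantity H_1 = ∫_0^L (ρ(y, s)² + u_y(y, s) v_y(y, s)) dy is independent of s. In fact, ∂_s(ρ² + u_y v_y) = 0 pointwise. -/

import Mathlib

/-!
Along each line `y = const`, the system gives `∂_s(u_y) = ρu` and `∂_s(v_y) = ρv`, so
`∂_s(ρ² + u_y v_y) = 2ρρ_s + ρ(u v_y + u_y v) = ρ(2ρ_s + (uv)_y)`, which vanishes by the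
first equation. The density is therefore constant in `s` at every `y`, and so is its integral.
-/

open Function

section PartialDerivatives

variable {𝕜 : Type*} [NontriviallyNormedField 𝕜] {E : Type*} [NormedAddCommGroup E]
  [NormedSpace 𝕜 E] {f : 𝕜 → 𝕜 → E} {y s : 𝕜}

theorem hasDerivAt_uncurry_left (hf : DifferentiableAt 𝕜 (uncurry f) (y, s)) :
    HasDerivAt (fun y' => f y' s) (fderiv 𝕜 (uncurry f) (y, s) (1, 0)) y := by
  have hline : HasDerivAt (fun y' => (y', s)) ((1 : 𝕜), (0 : 𝕜)) y :=
    (hasDerivAt_id y).prodMk (hasDerivAt_const y s)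
  exact hf.hasFDerivAt.comp_hasDerivAt y hline

theorem differentiableAt_uncurry_left (hf : DifferentiableAt 𝕜 (uncurry f) (y, s)) :
    DifferentiableAt 𝕜 (fun y' => f y' s) y :=
  (hasDerivAt_uncurry_left hf).differentiableAt

theorem differentiable_uncurry_right (hf : Differentiable 𝕜 (uncurry f)) (y : 𝕜) :
    Differentiable 𝕜 (f y) :=
  hf.comp ((differentiable_const y).prodMk differentiable_id)

theorem differentiable_deriv_uncurry_left (hf : ContDiff 𝕜 2 (uncurry f)) (y : 𝕜) :
    Differentiable 𝕜 fun s => deriv (fun y' => f y' s) y := by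
  have hdiff : Differentiable 𝕜 (uncurry f) := hf.differentiable two_ne_zero
  have hfderiv : Differentiable 𝕜 fun p => fderiv 𝕜 (uncurry f) p (1, 0) :=
    ((hf.fderiv_right (m := 1) le_rfl).clm_apply contDiff_const).differentiable one_ne_zero
  have hpartial :
      (fun s => deriv (fun y' => f y' s) y) = fun s => fderiv 𝕜 (uncurry f) (y, s) (1, 0) :=
    funext fun s => (hasDerivAt_uncurry_left (hdiff (y, s))).deriv
  rw [hpartial]
  exact hfderiv.comp ((differentiable_const y).prodMk differentiable_id)

end PartialDerivatives

theorem coupledCD_deriv_density_eq_zero {ρ u v : ℝ → ℝ → ℝ} {y s : ℝ}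
    (hρ : DifferentiableAt ℝ (ρ y) s)
    (hu : ContDiff ℝ 2 (uncurry u)) (hv : ContDiff ℝ 2 (uncurry v))
    (hCD1 : deriv (fun s' => ρ y s') s + deriv (fun y' => u y' s * v y' s / 2) y = 0)
    (hCD2 : deriv (fun s' => deriv (fun y' => u y' s') y) s = ρ y s * u y s)
    (hCD3 : deriv (fun s' => deriv (fun y' => v y' s') y) s = ρ y s * v y s) :
    deriv (fun s' =>
        (ρ y s') ^ 2 + deriv (fun y' => u y' s') y * deriv (fun y' => v y' s') y) s = 0 := by
  have huy : DifferentiableAt ℝ (fun y' => u y' s) y :=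
    differentiableAt_uncurry_left ((hu.differentiable two_ne_zero) _)
  have hvy : DifferentiableAt ℝ (fun y' => v y' s) y :=
    differentiableAt_uncurry_left ((hv.differentiable two_ne_zero) _)
  have hflux : deriv (fun y' => u y' s * v y' s / 2) y
      = (deriv (fun y' => u y' s) y * v y s + u y s * deriv (fun y' => v y' s) y) / 2 :=
    ((huy.hasDerivAt.mul hvy.hasDerivAt).div_const 2).deriv
  have hus : HasDerivAt (fun s' => deriv (fun y' => u y' s') y) (ρ y s * u y s) s :=
    hCD2 ▸ (differentiable_deriv_uncurry_left hu y s).hasDerivAt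
  have hvs : HasDerivAt (fun s' => deriv (fun y' => v y' s') y) (ρ y s * v y s) s :=
    hCD3 ▸ (differentiable_deriv_uncurry_left hv y s).hasDerivAt
  have hρs : HasDerivAt (fun s' => ρ y s') (deriv (fun s' => ρ y s') s) s := hρ.hasDerivAt
  have hdensity : HasDerivAt (fun s' =>
      (ρ y s') ^ 2 + deriv (fun y' => u y' s') y * deriv (fun y' => v y' s') y) _ s :=
    (hρs.pow 2).add (hus.mul hvs)
  rw [hflux] at hCD1
  rw [hdensity.deriv]
  linear_combination (2 * ρ y s) * hCD1

theorem coupledCD_H1_conserved_general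
    (ρ u v : ℝ → ℝ → ℝ) (L : ℝ)
    (hρ : ContDiff ℝ 2 (Function.uncurry ρ))
    (hu : ContDiff ℝ 2 (Function.uncurry u))
    (hv : ContDiff ℝ 2 (Function.uncurry v))
    (hCD1 : ∀ y s : ℝ,
      deriv (fun s' => ρ y s') s + deriv (fun y' => u y' s * v y' s / 2) y = 0)
    (hCD2 : ∀ y s : ℝ, deriv (fun s' => deriv (fun y' => u y' s') y) s = ρ y s * u y s)
    (hCD3 : ∀ y s : ℝ, deriv (fun s' => deriv (fun y' => v y' s') y) s = ρ y s * v y s) :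
    (∀ s₁ s₂ : ℝ,
      (∫ y in (0:ℝ)..L,
          ((ρ y s₁) ^ 2 + deriv (fun y' => u y' s₁) y * deriv (fun y' => v y' s₁) y))
        = ∫ y in (0:ℝ)..L,
            ((ρ y s₂) ^ 2 + deriv (fun y' => u y' s₂) y * deriv (fun y' => v y' s₂) y)) ∧
    (∀ y s : ℝ,
      deriv (fun s' =>
        (ρ y s') ^ 2 + deriv (fun y' => u y' s') y * deriv (fun y' => v y' s') y) s = 0) := by
  have hρs : ∀ y, Differentiable ℝ (ρ y) :=
    differentiable_uncurry_right (hρ.differentiable two_ne_zero)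
  have hdensity : ∀ y s, deriv (fun s' =>
      (ρ y s') ^ 2 + deriv (fun y' => u y' s') y * deriv (fun y' => v y' s') y) s = 0 :=
    fun y s => coupledCD_deriv_density_eq_zero (hρs y s) hu hv (hCD1 y s) (hCD2 y s) (hCD3 y s)
  refine ⟨fun s₁ s₂ => ?_, hdensity⟩
  congr 1
  funext y
  exact is_const_of_deriv_eq_zero (((hρs y).pow 2).add
    ((differentiable_deriv_uncurry_left hu y).mul (differentiable_deriv_uncurry_left hv y)))
    (hdensity y) s₁ s₂

/-- **Conservation of `H₁ = ∫ (ρ² + u_y v_y) dy` for the coupled CD system.**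
If `(ρ, u, v)` is a `C²`, `L`-periodic-in-`y` solution of `ρ_s + (uv/2)_y = 0`,
`u_{ys} = ρu`, `v_{ys} = ρv`, then `∫_0^L (ρ² + u_y v_y) dy` does not depend on `s`;
in fact `∂_s(ρ² + u_y v_y) = 0` pointwise. -/
theorem coupledCD_H1_conserved
    (ρ u v : ℝ → ℝ → ℝ) (L : ℝ) (hL : 0 < L)
    (hρ : ContDiff ℝ 2 (Function.uncurry ρ))
    (hu : ContDiff ℝ 2 (Function.uncurry u))
    (hv : ContDiff ℝ 2 (Function.uncurry v))
    (hperρ : ∀ y s : ℝ, ρ (y + L) s = ρ y s)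
    (hperu : ∀ y s : ℝ, u (y + L) s = u y s)
    (hperv : ∀ y s : ℝ, v (y + L) s = v y s)
    (hCD1 : ∀ y s : ℝ,
      deriv (fun s' => ρ y s') s + deriv (fun y' => u y' s * v y' s / 2) y = 0)
    (hCD2 : ∀ y s : ℝ, deriv (fun s' => deriv (fun y' => u y' s') y) s = ρ y s * u y s)
    (hCD3 : ∀ y s : ℝ, deriv (fun s' => deriv (fun y' => v y' s') y) s = ρ y s * v y s) :
    (∀ s₁ s₂ : ℝ,
      (∫ y in (0:ℝ)..L,
          ((ρ y s₁) ^ 2 + deriv (fun y' => u y' s₁) y * deriv (fun y' => v y' s₁) y))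
        = ∫ y in (0:ℝ)..L,
            ((ρ y s₂) ^ 2 + deriv (fun y' => u y' s₂) y * deriv (fun y' => v y' s₂) y)) ∧
    (∀ y s : ℝ,
      deriv (fun s' =>
        (ρ y s') ^ 2 + deriv (fun y' => u y' s') y * deriv (fun y' => v y' s') y) s = 0) :=
  coupledCD_H1_conserved_general ρ u v L hρ hu hv hCD1 hCD2 hCD3
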